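/- If (M,g') is globally hyperbolic and g ≤ g', then every Cauchy hypersurface of (M,g') is a Cauchy hypersurface of (M,g). -/

import Mathlib

open Manifold Set Topology Filter

/-- The causal data of a (continuous, time-oriented) Lorentzian metric on a manifold `M`
modeled on `E`.  The tangent space `TangentSpace 𝓘(ℝ, E) x` is definitionally `E`, so the
metric is recorded as a family of symmetric bilinear forms on `E`, together with a
continuous timelike vector field fixing the time orientation. -/
structure LorentzMetric (E : Type*) [NormedAddCommGroup E] [NormedSpace ℝ E]
    (M : Type*) [TopologicalSpace M] [ChartedSpace E M] where
  val : M → E →ₗ[ℝ] E →ₗ[ℝ] ℝ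
  symm : ∀ x u v, val x u v = val x v u
  cont : Continuous fun p : M × E × E => val p.1 p.2.1 p.2.2
  timeOrient : M → E
  timeOrient_cont : Continuous timeOrient
  timeOrient_timelike : ∀ x, val x (timeOrient x) (timeOrient x) < 0

namespace LorentzMetric

variable {E : Type*} [NormedAddCommGroup E] [NormedSpace ℝ E]
  {M : Type*} [TopologicalSpace M] [ChartedSpace E M]

/-- `v` is a future-directed causal vector at `x`. -/
def causalVec (g : LorentzMetric E M) (x : M) (v : E) : Prop :=
  v ≠ 0 ∧ g.val x v v ≤ 0 ∧ g.val x v (g.timeOrient x) < 0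

/-- `v` is a future-directed timelike vector at `x`. -/
def timelikeVec (g : LorentzMetric E M) (x : M) (v : E) : Prop :=
  g.val x v v < 0 ∧ g.val x v (g.timeOrient x) < 0

/-- `g < g'` : the causal cone of `g` lies inside the open timelike cone of `g'`
at every point. -/
def lt (g g' : LorentzMetric E M) : Prop :=
  ∀ x v, g.causalVec x v → g'.timelikeVec x v

/-- `g ≤ g'` : the causal cone of `g` lies inside the causal cone of `g'` at every point. -/
def le (g g' : LorentzMetric E M) : Prop :=
  ∀ x v, g.causalVec x v → g'.causalVec x v

/-- The velocity vector of a curve `γ` at time `t`, as a tangent vector at `γ t`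
(identified with a vector of `E`). -/
noncomputable def vel (γ : ℝ → M) (t : ℝ) : E :=
  mfderiv (𝓘(ℝ)) (𝓘(ℝ, E)) γ t (1 : ℝ)

/-- `γ` is a future-directed causal curve on the parameter set `A`. -/
def IsCausalCurveOn (g : LorentzMetric E M) (γ : ℝ → M) (A : Set ℝ) : Prop :=
  ∀ t ∈ A, MDifferentiableAt (𝓘(ℝ)) (𝓘(ℝ, E)) γ t ∧ g.causalVec (γ t) (vel γ t)

/-- `γ` is a future-directed timelike curve on the parameter set `A`. -/
def IsTimelikeCurveOn (g : LorentzMetric E M) (γ : ℝ → M) (A : Set ℝ) : Prop :=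
  ∀ t ∈ A, MDifferentiableAt (𝓘(ℝ)) (𝓘(ℝ, E)) γ t ∧ g.timelikeVec (γ t) (vel γ t)

/-- The causal relation `x ≤ y` of `(M, g)`. -/
def JRel (g : LorentzMetric E M) (x y : M) : Prop :=
  x = y ∨ ∃ γ : ℝ → M, ∃ a b : ℝ, a < b ∧ γ a = x ∧ γ b = y ∧
    ContinuousOn γ (Icc a b) ∧ g.IsCausalCurveOn γ (Icc a b)

/-- The chronological relation `x ≪ y` of `(M, g)`. -/
def IRel (g : LorentzMetric E M) (x y : M) : Prop :=
  ∃ γ : ℝ → M, ∃ a b : ℝ, a < b ∧ γ a = x ∧ γ b = y ∧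
    ContinuousOn γ (Icc a b) ∧ g.IsTimelikeCurveOn γ (Icc a b)

/-- Causal future of a set. -/
def JPlus (g : LorentzMetric E M) (K : Set M) : Set M := {y | ∃ x ∈ K, g.JRel x y}

/-- Causal past of a set. -/
def JMinus (g : LorentzMetric E M) (K : Set M) : Set M := {y | ∃ x ∈ K, g.JRel y x}

/-- Chronological future of a set. -/
def IPlus (g : LorentzMetric E M) (K : Set M) : Set M := {y | ∃ x ∈ K, g.IRel x y}

/-- Chronological past of a set. -/
def IMinus (g : LorentzMetric E M) (K : Set M) : Set M := {y | ∃ x ∈ K, g.IRel y x}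

/-- The spacetime `(M, g)` is causal: there are no closed causal curves, i.e. the
causal relation is antisymmetric. -/
def IsCausalST (g : LorentzMetric E M) : Prop :=
  ∀ x y, g.JRel x y → g.JRel y x → x = y

/-- Global hyperbolicity: causal, with compact causal diamonds. -/
def GloballyHyperbolic (g : LorentzMetric E M) : Prop :=
  g.IsCausalST ∧ ∀ p q : M, IsCompact (g.JPlus {p} ∩ g.JMinus {q})

/-- An inextendible future-directed causal curve (defined on all of `ℝ`, with no
endpoint in either time direction). -/
def IsInextCausal (g : LorentzMetric E M) (γ : ℝ → M) : Prop :=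
  g.IsCausalCurveOn γ univ ∧ (¬ ∃ p, Tendsto γ atTop (nhds p)) ∧
    (¬ ∃ p, Tendsto γ atBot (nhds p))

/-- Non-total imprisonment: no inextendible causal curve is contained in a compact set. -/
def NonTotalImprisoning (g : LorentzMetric E M) : Prop :=
  ∀ γ : ℝ → M, g.IsInextCausal γ → ∀ K : Set M, IsCompact K → ¬ range γ ⊆ K

/-- A set is acausal if no two distinct points of it are causally related. -/
def Acausal (g : LorentzMetric E M) (S : Set M) : Prop :=
  ∀ x ∈ S, ∀ y ∈ S, g.JRel x y → x = y

/-- A Cauchy hypersurface: a closed acausal set met by every inextendible causal curve. -/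
def IsCauchySurface (g : LorentzMetric E M) (S : Set M) : Prop :=
  IsClosed S ∧ g.Acausal S ∧ ∀ γ : ℝ → M, g.IsInextCausal γ → ∃ t, γ t ∈ S

/-- Stable causality: the light cones can be widened keeping causality. -/
def StablyCausal (g : LorentzMetric E M) : Prop :=
  ∃ g' : LorentzMetric E M, g.lt g' ∧ g'.IsCausalST

/-- The Seifert relation `J⁺_S = ⋂_{g' > g} J⁺_{g'}`. -/
def JSeifert (g : LorentzMetric E M) (x y : M) : Prop :=
  ∀ g' : LorentzMetric E M, g.lt g' → g'.JRel x y

/-- The Lorentzian length of a curve. -/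
noncomputable def length (g : LorentzMetric E M) (γ : ℝ → M) (a b : ℝ) : ℝ :=
  ∫ t in a..b, Real.sqrt (- g.val (γ t) (vel γ t) (vel γ t))

/-- The Lorentzian distance: the supremum of lengths of future-directed causal curves
from `x` to `y` (zero if there are none). -/
noncomputable def ldist (g : LorentzMetric E M) (x y : M) : ℝ :=
  sSup ({0} ∪ {L : ℝ | ∃ γ : ℝ → M, ∃ a b : ℝ, a < b ∧ γ a = x ∧ γ b = y ∧
    ContinuousOn γ (Icc a b) ∧ g.IsCausalCurveOn γ (Icc a b) ∧ L = g.length γ a b})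

end LorentzMetric

open LorentzMetric

variable {E : Type*} [NormedAddCommGroup E] [NormedSpace ℝ E]
  {M : Type*} [TopologicalSpace M] [ChartedSpace E M]
  [IsManifold (𝓘(ℝ, E)) (⊤ : ℕ∞) M]
  [ConnectedSpace M] [T2Space M] [SecondCountableTopology M]

/-- if `(M,g')` is globally hyperbolic and `g ≤ g'`, every Cauchy
hypersurface of `(M,g')` is a Cauchy hypersurface of `(M,g)`. -/
theorem isCauchySurface_of_le (g g' : LorentzMetric E M)
    (hgh : g'.GloballyHyperbolic) (h : g.le g') (S : Set M)
    (hS : g'.IsCauchySurface S) : g.IsCauchySurface S := by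
  obtain ⟨hcl, hac, hmeet⟩ := hS
  have hcurve : ∀ γ A, g.IsCausalCurveOn γ A → g'.IsCausalCurveOn γ A := by
    intro γ A hγ t ht
    obtain ⟨hd, hc⟩ := hγ t ht
    exact ⟨hd, h _ _ hc⟩
  have hJ : ∀ x y, g.JRel x y → g'.JRel x y := by
    rintro x y (rfl | ⟨γ, a, b, hab, ha, hb, hcont, hcaus⟩)
    · exact Or.inl rfl
    · exact Or.inr ⟨γ, a, b, hab, ha, hb, hcont, hcurve _ _ hcaus⟩
  refine ⟨hcl, fun x hx y hy hxy => hac x hx y hy (hJ _ _ hxy), fun γ hγ => ?_⟩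
  exact hmeet γ ⟨hcurve _ _ hγ.1, hγ.2.1, hγ.2.2⟩
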